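/- arXiv:1205.0609 — 2 statements merged into one kernel-verified Lean document; each statement's English description precedes it below -/
import Mathlib

section
/- For positive integers a, d with a, d ≥ 2, ζ_{sl(4)}(a,0,1,d,0,1) = ζ_{sl(4)}(0,a,1,d,0,1), and moreover ζ_{sl(4)}(a,0,1,d,0,1) = ζ_{sl(4)}(a,0,1,0,0,d+1) + ∑_{i=1}^{d} ζ(d+2−i, i, a), where ζ(s₁,s₂,s₃) is the triple Euler sum over n₁ > n₂ > n₃ ≥ 1. -/
noncomputable def wittenSl4 (a b c d e f : ℕ) : ℝ :=
  ∑' (n₁ : ℕ) (n₂ : ℕ) (n₃ : ℕ),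
    1 / ((n₁ + 1 : ℝ) ^ a * (n₂ + 1 : ℝ) ^ b * (n₃ + 1 : ℝ) ^ c *
      (n₁ + n₂ + 2 : ℝ) ^ d * (n₂ + n₃ + 2 : ℝ) ^ e * (n₁ + n₂ + n₃ + 3 : ℝ) ^ f)

noncomputable def tripleZeta (s₁ s₂ s₃ : ℕ) : ℝ :=
  ∑' (n : ℕ) (j : ℕ) (k : ℕ),
    1 / ((n + j + k + 3 : ℝ) ^ s₁ * (n + j + 2 : ℝ) ^ s₂ * (n + 1 : ℝ) ^ s₃)

/-!
With `m = n₁ + n₂ + 2` and `y = n₃ + 1`, the summand of `ζ_{sl(4)}(a,0,1,d,0,1)` is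
`1 / ((n₁+1)^a · y · m^d · (m+y))`, and the partial fraction expansion
`1 / (y m^d (m+y)) = 1 / (y (m+y)^(d+1)) + ∑_{j<d} 1 / (m^(j+1) (m+y)^(d+1-j))`
splits it into the summand of `ζ_{sl(4)}(a,0,1,0,0,d+1)` and those of
`ζ_{sl(4)}(a,0,0,j+1,0,d+1-j) = ζ(d+1-j, j+1, a)`. The first identity is the symmetry
`n₁ ↔ n₂`. All rearrangements are done in `ℝ≥0∞`, where they are free; the series
converge since the summand is at most `∏ 1/(nᵢ+1)²`.
-/

open Finset ENNReal

theorem ENNReal.tsum_add_sum {α ι : Type*} (s : Finset ι) (f : α → ℝ≥0∞) (g : ι → α → ℝ≥0∞) :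
    ∑' n, (f n + ∑ j ∈ s, g j n) = ∑' n, f n + ∑ j ∈ s, ∑' n, g j n := by
  rw [ENNReal.tsum_add, Summable.tsum_finsetSum fun _ _ ↦ ENNReal.summable]

theorem ENNReal.toReal_tsum_tsum_tsum_ofReal {α β γ : Type*} {g : α → β → γ → ℝ}
    (hg : ∀ i j k, 0 ≤ g i j k) (h : ∑' (i) (j) (k), ENNReal.ofReal (g i j k) ≠ ∞) :
    (∑' (i) (j) (k), ENNReal.ofReal (g i j k)).toReal = ∑' (i) (j) (k), g i j k := by
  have h₂ i : ∑' (j) (k), ENNReal.ofReal (g i j k) ≠ ∞ :=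
    ne_top_of_le_ne_top h (ENNReal.le_tsum i)
  have h₃ i j : ∑' k, ENNReal.ofReal (g i j k) ≠ ∞ :=
    ne_top_of_le_ne_top (h₂ i) (ENNReal.le_tsum j)
  simp only [ENNReal.tsum_toReal_eq h₂, ENNReal.tsum_toReal_eq (h₃ _),
    ENNReal.tsum_toReal_eq fun _ ↦ ofReal_ne_top, ENNReal.toReal_ofReal (hg _ _ _)]

theorem tsum_ofReal_one_div_add_one_sq_ne_top :
    ∑' n : ℕ, ENNReal.ofReal (1 / ((n : ℝ) + 1) ^ 2) ≠ ∞ := by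
  have hs : Summable fun n : ℕ ↦ 1 / ((n : ℝ) + 1) ^ 2 := by
    simpa using (summable_nat_add_iff 1).mpr (Real.summable_one_div_nat_pow.mpr one_lt_two)
  rw [← ENNReal.ofReal_tsum_of_nonneg (fun _ ↦ by positivity) hs]
  exact ofReal_ne_top

theorem one_div_mul_pow_mul_add_eq_add_sum {K : Type*} [Field K] {m y : K} (hm : m ≠ 0) (hy : y ≠ 0)
    (hmy : m + y ≠ 0) (d : ℕ) :
    1 / (y * m ^ d * (m + y)) =
      1 / (y * (m + y) ^ (d + 1)) + ∑ j ∈ range d, 1 / (m ^ (j + 1) * (m + y) ^ (d + 1 - j)) := by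
  set T : ℕ → K := fun k ↦ 1 / (y * m ^ k * (m + y) ^ (d + 1 - k))
  -- each step is `1 / (y * m) = 1 / (y * (m + y)) + 1 / (m * (m + y))`
  have step : ∀ j ∈ range d,
      T (j + 1) - T j = 1 / (m ^ (j + 1) * (m + y) ^ (d + 1 - j)) := by
    intro j hj
    obtain ⟨e, rfl⟩ : ∃ e, d = j + e + 1 := ⟨d - j - 1, by grind⟩
    simp only [T, show j + e + 1 + 1 - (j + 1) = e + 1 by omega,
      show j + e + 1 + 1 - j = e + 2 by omega]
    field_simp
    ring
  rw [← sum_congr rfl step, sum_range_sub]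
  simp only [T, add_tsub_cancel_left, Nat.sub_zero, pow_zero, pow_one, mul_one]
  ring

noncomputable def wittenSl4Term (a b c d e f n₁ n₂ n₃ : ℕ) : ℝ :=
  1 / ((n₁ + 1 : ℝ) ^ a * (n₂ + 1 : ℝ) ^ b * (n₃ + 1 : ℝ) ^ c *
    (n₁ + n₂ + 2 : ℝ) ^ d * (n₂ + n₃ + 2 : ℝ) ^ e * (n₁ + n₂ + n₃ + 3 : ℝ) ^ f)

noncomputable def wittenSl4ENNReal (a b c d e f : ℕ) : ℝ≥0∞ :=
  ∑' (n₁) (n₂) (n₃), ENNReal.ofReal (wittenSl4Term a b c d e f n₁ n₂ n₃)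

section

variable {a b c d e f : ℕ}

theorem wittenSl4Term_nonneg (n₁ n₂ n₃ : ℕ) : 0 ≤ wittenSl4Term a b c d e f n₁ n₂ n₃ := by
  unfold wittenSl4Term
  positivity

theorem wittenSl4_eq_toReal (h : wittenSl4ENNReal a b c d e f ≠ ∞) :
    wittenSl4 a b c d e f = (wittenSl4ENNReal a b c d e f).toReal :=
  (ENNReal.toReal_tsum_tsum_tsum_ofReal (fun _ _ _ ↦ wittenSl4Term_nonneg ..) h).symm

theorem tripleZeta_eq_wittenSl4 (s₁ s₂ s₃ : ℕ) :
    tripleZeta s₁ s₂ s₃ = wittenSl4 s₃ 0 0 s₂ 0 s₁ := by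
  unfold tripleZeta wittenSl4
  refine tsum_congr fun n₁ ↦ tsum_congr fun n₂ ↦ tsum_congr fun n₃ ↦ ?_
  simp only [pow_zero, mul_one]
  ring

theorem wittenSl4Term_swap (n₁ n₂ n₃ : ℕ) :
    wittenSl4Term a b c d 0 f n₁ n₂ n₃ = wittenSl4Term b a c d 0 f n₂ n₁ n₃ := by
  unfold wittenSl4Term
  ring

theorem wittenSl4ENNReal_swap : wittenSl4ENNReal a b c d 0 f = wittenSl4ENNReal b a c d 0 f := by
  rw [wittenSl4ENNReal, ENNReal.tsum_comm]
  simp only [wittenSl4Term_swap (a := a)]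
  rfl

theorem wittenSl4Term_eq_add_sum (n₁ n₂ n₃ : ℕ) :
    wittenSl4Term a b 1 d e 1 n₁ n₂ n₃ = wittenSl4Term a b 1 0 e (d + 1) n₁ n₂ n₃ +
      ∑ j ∈ range d, wittenSl4Term a b 0 (j + 1) e (d + 1 - j) n₁ n₂ n₃ := by
  simp only [wittenSl4Term, pow_zero, pow_one, mul_one]
  have key := one_div_mul_pow_mul_add_eq_add_sum (m := (n₁ + n₂ + 2 : ℝ)) (y := n₃ + 1)
    (by positivity) (by positivity) (by positivity) d
  rw [show (n₁ + n₂ + n₃ + 3 : ℝ) = (n₁ + n₂ + 2) + (n₃ + 1) by ring]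
  generalize (n₁ + n₂ + 2 : ℝ) = m at key ⊢
  generalize (n₃ + 1 : ℝ) = y at key ⊢
  generalize m + y = N at key ⊢
  calc _ = ((n₁ + 1 : ℝ) ^ a * (n₂ + 1 : ℝ) ^ b * (n₂ + n₃ + 2 : ℝ) ^ e)⁻¹ *
        (1 / (y * m ^ d * N)) := by ring
    _ = _ := by
      rw [key, mul_add, mul_sum]
      congr 1
      · ring
      · exact sum_congr rfl fun j _ ↦ by ring

theorem wittenSl4ENNReal_eq_add_sum :
    wittenSl4ENNReal a b 1 d e 1 = wittenSl4ENNReal a b 1 0 e (d + 1) +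
      ∑ j ∈ range d, wittenSl4ENNReal a b 0 (j + 1) e (d + 1 - j) := by
  simp only [wittenSl4ENNReal, wittenSl4Term_eq_add_sum,
    ENNReal.ofReal_add (wittenSl4Term_nonneg ..) (sum_nonneg fun _ _ ↦ wittenSl4Term_nonneg ..),
    ENNReal.ofReal_sum_of_nonneg fun _ _ ↦ wittenSl4Term_nonneg .., ENNReal.tsum_add_sum]

theorem wittenSl4Term_le (ha : 2 ≤ a) (hd : 2 ≤ d) (n₁ n₂ n₃ : ℕ) :
    wittenSl4Term a b 1 d e 1 n₁ n₂ n₃ ≤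
      1 / ((n₁ : ℝ) + 1) ^ 2 * (1 / ((n₂ : ℝ) + 1) ^ 2) * (1 / ((n₃ : ℝ) + 1) ^ 2) := by
  rw [div_mul_div_comm, div_mul_div_comm, one_mul, one_mul, wittenSl4Term]
  apply one_div_le_one_div_of_le (by positivity)
  calc ((n₁ : ℝ) + 1) ^ 2 * ((n₂ : ℝ) + 1) ^ 2 * ((n₃ : ℝ) + 1) ^ 2
      = ((n₁ : ℝ) + 1) ^ 2 * 1 * ((n₃ : ℝ) + 1) ^ 1 * ((n₂ : ℝ) + 1) ^ 2 * 1 *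
          ((n₃ : ℝ) + 1) ^ 1 := by ring
    _ ≤ _ := by
      gcongr
      · exact le_add_of_nonneg_left n₁.cast_nonneg
      · exact one_le_pow₀ (le_add_of_nonneg_left n₂.cast_nonneg)
      · exact (pow_le_pow_left₀ (by positivity) (by linarith) 2).trans
          (pow_le_pow_right₀ (by linarith) hd)
      · exact one_le_pow₀ (by linarith)
      · exact le_add_of_nonneg_left (by positivity)
      · norm_num

theorem wittenSl4ENNReal_ne_top (ha : 2 ≤ a) (hd : 2 ≤ d) :
    wittenSl4ENNReal a b 1 d e 1 ≠ ∞ := by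
  have hS := tsum_ofReal_one_div_add_one_sq_ne_top
  set S := ∑' n : ℕ, ENNReal.ofReal (1 / ((n : ℝ) + 1) ^ 2)
  refine ne_top_of_le_ne_top (mul_ne_top (mul_ne_top hS hS) hS) ?_
  calc wittenSl4ENNReal a b 1 d e 1
      ≤ ∑' (n₁ : ℕ) (n₂ : ℕ) (n₃ : ℕ), ENNReal.ofReal (1 / ((n₁ : ℝ) + 1) ^ 2) *
          ENNReal.ofReal (1 / ((n₂ : ℝ) + 1) ^ 2) * ENNReal.ofReal (1 / ((n₃ : ℝ) + 1) ^ 2) := by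
        refine ENNReal.tsum_le_tsum fun n₁ ↦ ENNReal.tsum_le_tsum fun n₂ ↦
          ENNReal.tsum_le_tsum fun n₃ ↦ ?_
        rw [← ENNReal.ofReal_mul (by positivity), ← ENNReal.ofReal_mul (by positivity)]
        exact ENNReal.ofReal_le_ofReal (wittenSl4Term_le ha hd n₁ n₂ n₃)
    _ = S * S * S := by simp only [ENNReal.tsum_mul_left, ENNReal.tsum_mul_right, S]

end

theorem wittenSl4_a01d01 (a d : ℕ) (ha : 2 ≤ a) (hd : 2 ≤ d) :
    wittenSl4 a 0 1 d 0 1 = wittenSl4 0 a 1 d 0 1 ∧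
    wittenSl4 a 0 1 d 0 1 =
      wittenSl4 a 0 1 0 0 (d + 1) +
        ∑ i ∈ Finset.Icc 1 d, tripleZeta (d + 2 - i) i a := by
  have hfin : wittenSl4ENNReal a 0 1 d 0 1 ≠ ∞ := wittenSl4ENNReal_ne_top ha hd
  have hswap : wittenSl4ENNReal a 0 1 d 0 1 = wittenSl4ENNReal 0 a 1 d 0 1 := wittenSl4ENNReal_swap
  have hsplit : wittenSl4ENNReal a 0 1 d 0 1 = _ := wittenSl4ENNReal_eq_add_sum
  obtain ⟨hfin₀, hfinSum⟩ := ENNReal.add_ne_top.mp (hsplit ▸ hfin)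
  have hfinTerm := ENNReal.sum_ne_top.mp hfinSum
  refine ⟨?_, ?_⟩
  · rw [wittenSl4_eq_toReal hfin, wittenSl4_eq_toReal (hswap ▸ hfin), hswap]
  · rw [wittenSl4_eq_toReal hfin, hsplit, toReal_add hfin₀ hfinSum, toReal_sum hfinTerm,
      ← wittenSl4_eq_toReal hfin₀, ← Ico_add_one_right_eq_Icc, sum_Ico_eq_sum_range,
      add_tsub_cancel_right]
    refine congrArg _ (sum_congr rfl fun j hj ↦ ?_)
    rw [tripleZeta_eq_wittenSl4, show d + 2 - (1 + j) = d + 1 - j by omega, add_comm 1 j,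
      wittenSl4_eq_toReal (hfinTerm j hj)]
end

section
/- For positive integers a, b, c, d, f (all ≥ 2, ensuring convergence), ζ_{sl(4)}(a,b,c,d,0,f) = ∑_{i=2}^{c} C(c+f−i−1, f−1)(−1)^{c+i} ζ(i) ζ_{sl(3)}(a,b,c+d+f−i) + ∑_{i=2}^{f} C(c+f−i−1, c−1)(−1)^{c} { ∑_{j=1}^{a} C(a+b−j−1, b−1) ζ(i, a+b+c+d+f−i−j, j) + ∑_{j=1}^{b} C(a+b−j−1, a−1) ζ(i, a+b+c+d+f−i−j, j) } − (−1)^{c} C(c+f−2, c−1) ζ_{sl(4)}(a,b,1,c+d+f−2,0,1), where ζ(s₁,s₂,s₃) is the triple Euler sum over n₁ > n₂ > n₃ ≥ 1. -/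
noncomputable def wittenSl3 (a b c : ℕ) : ℝ :=
  ∑' (m : ℕ) (n : ℕ), 1 / ((m + 1 : ℝ) ^ a * (n + 1 : ℝ) ^ b * (m + n + 2 : ℝ) ^ c)

noncomputable def rzeta (s : ℕ) : ℝ := ∑' (n : ℕ), 1 / ((n + 1 : ℝ) ^ s)

/-!
Write `x = n₁ + 1`, `y = n₂ + 1`, `z = n₃ + 1` and `v = x + y`. Partial fractions in `z` for
`1 / (z ^ c * (v + z) ^ f)`, viewed as a function of `z` with `v` as a constant, split the summand
into three kinds of terms: those without the factor `v + z`, which factor as `ζ(i) ζ_{sl(3)}`; those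
without `z`, in which partial fractions for `1 / (x ^ a * y ^ b)` over `v` leave sums over
`x < v < v + z`, i.e. triple Euler sums; and, from merging the two `i = 1` terms, the boundary term
`1 / (z (v + z) v ^ (c + f - 2))`. Every series involved is dominated by `∑ 1 / (x² y² z²)`, which
justifies the rearrangements.
-/

open Finset

section PartialFractions

variable {K : Type*} [Field K]

def partialFracSum (X S : K) (m n : ℕ) : K :=
  ∑ j ∈ Icc 1 m, ((m + n - j - 1).choose (n - 1) : K) / (X ^ j * S ^ (m + n - j))

lemma partialFracSum_one_left (X S : K) (n : ℕ) :
    partialFracSum X S 1 n = 1 / (X * S ^ n) := by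
  simp [partialFracSum, show 1 + n - 1 = n by omega]

lemma partialFracSum_succ_one (X S : K) (m : ℕ) :
    partialFracSum X S (m + 1) 1 = partialFracSum X S m 1 / S + 1 / (X ^ (m + 1) * S) := by
  rw [partialFracSum, sum_Icc_succ_top (by omega), partialFracSum, sum_div]
  congr 1
  · refine sum_congr rfl fun j hj => ?_
    rw [mem_Icc] at hj
    rw [show m + 1 + 1 - j = (m + 1 - j) + 1 by omega, pow_succ]
    simp only [Nat.sub_self, Nat.choose_zero_right]
    ring
  · simp

lemma partialFracSum_succ_succ (X S : K) (m : ℕ) {n : ℕ} (hn : 1 ≤ n) :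
    partialFracSum X S (m + 1) (n + 1) =
      (partialFracSum X S m (n + 1) + partialFracSum X S (m + 1) n) / S := by
  obtain ⟨n, rfl⟩ : ∃ k, n = k + 1 := ⟨n - 1, by omega⟩
  have extend : partialFracSum X S m (n + 1 + 1) =
      ∑ j ∈ Icc 1 (m + 1),
        ((m + n + 1 - j).choose (n + 1) : K) / (X ^ j * S ^ (m + n + 2 - j)) := by
    rw [sum_Icc_succ_top (by omega), partialFracSum,
      Nat.choose_eq_zero_of_lt (show m + n + 1 - (m + 1) < n + 1 by omega)]
    simp only [Nat.cast_zero, zero_div, add_zero]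
    exact sum_congr rfl fun j _ => by
      rw [show m + (n + 1 + 1) - j - 1 = m + n + 1 - j by omega, Nat.add_sub_cancel,
        show m + (n + 1 + 1) - j = m + n + 2 - j by omega]
  rw [extend, partialFracSum, partialFracSum, ← sum_add_distrib, sum_div]
  refine sum_congr rfl fun j hj => ?_
  rw [mem_Icc] at hj
  rw [show m + 1 + (n + 1 + 1) - j - 1 = (m + n + 1 - j) + 1 by omega,
    show m + 1 + (n + 1 + 1) - j = (m + n + 2 - j) + 1 by omega,
    show m + 1 + (n + 1) - j - 1 = m + n + 1 - j by omega,
    show m + 1 + (n + 1) - j = m + n + 2 - j by omega,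
    Nat.add_sub_cancel, Nat.choose_succ_succ', pow_succ]
  push_cast
  ring

theorem one_div_pow_mul_eq_partialFracSum (X Y : K) (hX : X ≠ 0) (hY : Y ≠ 0) (hXY : X + Y ≠ 0)
    (m : ℕ) : 1 / (X ^ m * Y) = partialFracSum X (X + Y) m 1 + 1 / (Y * (X + Y) ^ m) := by
  induction m with
  | zero => simp [partialFracSum]
  | succ m ih =>
    rw [partialFracSum_succ_one, eq_sub_of_add_eq ih.symm]
    field_simp
    ring

theorem one_div_pow_mul_pow_eq_partialFracSum (X Y : K) (hX : X ≠ 0) (hY : Y ≠ 0)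
    (hXY : X + Y ≠ 0) {m n : ℕ} (hm : 1 ≤ m) (hn : 1 ≤ n) :
    1 / (X ^ m * Y ^ n) = partialFracSum X (X + Y) m n + partialFracSum Y (X + Y) n m := by
  induction m, hm using Nat.le_induction generalizing n with
  | base =>
    rw [partialFracSum_one_left, add_comm X Y, mul_comm, pow_one,
      one_div_pow_mul_eq_partialFracSum Y X hY hX (by rwa [add_comm]), add_comm]
  | succ m hm ih =>
    induction n, hn using Nat.le_induction with
    | base =>
      rw [pow_one, partialFracSum_one_left,
        one_div_pow_mul_eq_partialFracSum X Y hX hY hXY]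
    | succ n hn ihn =>
      have pascal : 1 / (X ^ (m + 1) * Y ^ (n + 1)) =
          (1 / (X ^ m * Y ^ (n + 1)) + 1 / (X ^ (m + 1) * Y ^ n)) / (X + Y) := by
        field_simp
        ring
      rw [pascal, ih (by omega), ihn, partialFracSum_succ_succ _ _ _ hn,
        partialFracSum_succ_succ _ _ _ hm]
      ring

theorem one_div_pow_mul_add_pow_eq_sum (z v : K) (hz : z ≠ 0) (hv : v ≠ 0) (hvz : v + z ≠ 0)
    {c f : ℕ} (hc : 1 ≤ c) (hf : 1 ≤ f) :
    1 / (z ^ c * (v + z) ^ f) =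
      ∑ i ∈ Icc 1 c,
        ((c + f - i - 1).choose (f - 1) : K) * (-1) ^ (c + i) / (z ^ i * v ^ (c + f - i)) +
      ∑ i ∈ Icc 1 f,
        ((c + f - i - 1).choose (c - 1) : K) * (-1) ^ c / ((v + z) ^ i * v ^ (c + f - i)) := by
  have hsum : -z + (v + z) = v := by ring
  have h := one_div_pow_mul_pow_eq_partialFracSum (-z) (v + z) (neg_ne_zero.2 hz) hvz
    (by rwa [hsum]) hc hf
  rw [hsum] at h
  calc 1 / (z ^ c * (v + z) ^ f) = (-1) ^ c * (1 / ((-z) ^ c * (v + z) ^ f)) := by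
        rw [neg_pow z]
        field_simp
    _ = _ := by
      rw [h, mul_add, partialFracSum, partialFracSum, mul_sum, mul_sum, add_comm f c]
      congr 1 <;> refine sum_congr rfl fun i _ => ?_
      · have hsq : (-1 : K) ^ i * (-1) ^ i = 1 := by rw [← mul_pow]; norm_num
        rw [neg_pow z, pow_add]
        field_simp
        linear_combination -((c + f - i - 1).choose (f - 1) : K) * hsq
      · ring

theorem one_div_pow_mul_add_pow_eq_sum_sub (z v : K) (hz : z ≠ 0) (hv : v ≠ 0) (hvz : v + z ≠ 0)
    {c f : ℕ} (hc : 1 ≤ c) (hf : 1 ≤ f) :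
    1 / (z ^ c * (v + z) ^ f) =
      ∑ i ∈ Icc 2 c,
        ((c + f - i - 1).choose (f - 1) : K) * (-1) ^ (c + i) / (z ^ i * v ^ (c + f - i)) +
      ∑ i ∈ Icc 2 f,
        ((c + f - i - 1).choose (c - 1) : K) * (-1) ^ c / ((v + z) ^ i * v ^ (c + f - i)) -
      (-1) ^ c * ((c + f - 2).choose (c - 1) : K) / (z * (v + z) * v ^ (c + f - 2)) := by
  have hIoc (n : ℕ) : Ioc 1 n = Icc 2 n := by ext; simp only [mem_Ioc, mem_Icc]; omega
  rw [one_div_pow_mul_add_pow_eq_sum z v hz hv hvz hc hf, ← add_sum_Ioc_eq_sum_Icc hc,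
    ← add_sum_Ioc_eq_sum_Icc hf, hIoc, hIoc]
  obtain ⟨c, rfl⟩ : ∃ k, c = k + 1 := ⟨c - 1, by omega⟩
  obtain ⟨f, rfl⟩ : ∃ k, f = k + 1 := ⟨f - 1, by omega⟩
  have hends : ((c + f).choose f : K) * (-1) ^ (c + 1 + 1) / (z ^ 1 * v ^ (c + f + 1)) +
      ((c + f).choose c : K) * (-1) ^ (c + 1) / ((v + z) ^ 1 * v ^ (c + f + 1)) =
      -((-1) ^ (c + 1) * ((c + f).choose c : K) / (z * (v + z) * v ^ (c + f))) := by
    rw [Nat.choose_symm_add, pow_succ v, pow_succ (-1 : K) (c + 1)]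
    field_simp
    ring
  simp only [show c + 1 + (f + 1) - 1 = c + f + 1 by omega,
    show c + 1 + (f + 1) - 2 = c + f by omega, Nat.add_sub_cancel]
  linear_combination hends

end PartialFractions

lemma pow_mul_pow_le_add_pow {R : Type*} [CommSemiring R] [PartialOrder R] [IsOrderedRing R]
    {x y : R} (hx : 0 ≤ x) (hy : 0 ≤ y) (hxy : 1 ≤ x + y) {i j n : ℕ} (h : i + j ≤ n) :
    x ^ i * y ^ j ≤ (x + y) ^ n :=
  calc x ^ i * y ^ j ≤ (x + y) ^ i * (x + y) ^ j := by
        gcongr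
        · exact le_add_of_nonneg_right hy
        · exact le_add_of_nonneg_left hx
    _ = (x + y) ^ (i + j) := (pow_add _ _ _).symm
    _ ≤ (x + y) ^ n := pow_le_pow_right₀ hxy h

section Witten

noncomputable def wittenTerm (α β γ δ ε : ℕ) (x y z : ℝ) : ℝ :=
  1 / (x ^ α * y ^ β * z ^ γ * (x + y) ^ δ * (x + y + z) ^ ε)

-- Reducible, so that pointwise identities for `wittenTerm` rewrite the summands under `∑'`.
noncomputable abbrev wittenSummand (α β γ δ ε : ℕ) (p : ℕ × ℕ × ℕ) : ℝ :=
  wittenTerm α β γ δ ε (p.1 + 1) (p.2.1 + 1) (p.2.2 + 1)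

variable {α β γ δ ε : ℕ} {x y z : ℝ}

lemma wittenTerm_swap :
    wittenTerm α β γ δ ε x y z = wittenTerm β α γ δ ε y x z := by
  simp only [wittenTerm, add_comm y x]
  ring

theorem wittenTerm_eq_sum_sub {a b c d f : ℕ} (hz : z ≠ 0) (hxy : x + y ≠ 0)
    (hxyz : x + y + z ≠ 0) (hc : 1 ≤ c) (hf : 1 ≤ f) :
    wittenTerm a b c d f x y z =
      ∑ i ∈ Icc 2 c, ((c + f - i - 1).choose (f - 1) : ℝ) * (-1) ^ (c + i) *
        wittenTerm a b i (c + d + f - i) 0 x y z +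
      ∑ i ∈ Icc 2 f, ((c + f - i - 1).choose (c - 1) : ℝ) * (-1) ^ c *
        wittenTerm a b 0 (c + d + f - i) i x y z -
      (-1) ^ c * ((c + f - 2).choose (c - 1) : ℝ) *
        wittenTerm a b 1 (c + d + f - 2) 1 x y z := by
  have hfactor : wittenTerm a b c d f x y z =
      1 / (x ^ a * y ^ b * (x + y) ^ d) * (1 / (z ^ c * (x + y + z) ^ f)) := by
    rw [wittenTerm]
    ring
  rw [hfactor, one_div_pow_mul_add_pow_eq_sum_sub z (x + y) hz hxy hxyz hc hf, mul_sub, mul_add,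
    mul_sum, mul_sum]
  congr 1
  · congr 1 <;> refine sum_congr rfl fun i hi => ?_ <;> rw [mem_Icc] at hi
    · rw [wittenTerm, show c + d + f - i = d + (c + f - i) by omega]
      simp only [div_eq_mul_inv, mul_inv, pow_add]
      ring
    · rw [wittenTerm, show c + d + f - i = d + (c + f - i) by omega]
      simp only [div_eq_mul_inv, mul_inv, pow_add]
      ring
  · rw [wittenTerm, show c + d + f - 2 = d + (c + f - 2) by omega]
    simp only [div_eq_mul_inv, mul_inv, pow_add]
    ring

theorem wittenTerm_eq_sum_add {a b δ ε : ℕ} (hx : x ≠ 0) (hy : y ≠ 0) (hxy : x + y ≠ 0)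
    (ha : 1 ≤ a) (hb : 1 ≤ b) :
    wittenTerm a b 0 δ ε x y z =
      ∑ j ∈ Icc 1 a,
        ((a + b - j - 1).choose (b - 1) : ℝ) * wittenTerm j 0 0 (a + b + δ - j) ε x y z +
      ∑ j ∈ Icc 1 b,
        ((a + b - j - 1).choose (a - 1) : ℝ) * wittenTerm 0 j 0 (a + b + δ - j) ε x y z := by
  have hfactor : wittenTerm a b 0 δ ε x y z =
      1 / (x ^ a * y ^ b) * (1 / ((x + y) ^ δ * (x + y + z) ^ ε)) := by
    rw [wittenTerm]
    ring
  rw [hfactor, one_div_pow_mul_pow_eq_partialFracSum x y hx hy hxy ha hb, partialFracSum,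
    partialFracSum, add_comm b a, add_mul, sum_mul, sum_mul]
  congr 1 <;> refine sum_congr rfl fun j hj => ?_ <;> rw [mem_Icc] at hj
  · rw [wittenTerm, show a + b + δ - j = a + b - j + δ by omega, pow_add]
    ring
  · rw [wittenTerm, show a + b + δ - j = a + b - j + δ by omega, pow_add]
    ring

lemma wittenTerm_le (δ₁ δ₂ ε₁ ε₂ ε₃ : ℕ) (hδ : δ₁ + δ₂ ≤ δ) (hε : ε₁ + ε₂ + ε₃ ≤ ε)
    (hαx : 2 ≤ α + δ₁ + ε₁) (hβy : 2 ≤ β + δ₂ + ε₂) (hγz : 2 ≤ γ + ε₃)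
    (hx : 1 ≤ x) (hy : 1 ≤ y) (hz : 1 ≤ z) :
    wittenTerm α β γ δ ε x y z ≤ 1 / x ^ 2 * (1 / y ^ 2 * (1 / z ^ 2)) := by
  have key : x ^ 2 * y ^ 2 * z ^ 2 ≤ x ^ α * y ^ β * z ^ γ * (x + y) ^ δ * (x + y + z) ^ ε :=
    calc x ^ 2 * y ^ 2 * z ^ 2
        ≤ x ^ (α + δ₁ + ε₁) * y ^ (β + δ₂ + ε₂) * z ^ (γ + ε₃) := by
          gcongr
      _ = x ^ α * y ^ β * z ^ γ * (x ^ δ₁ * y ^ δ₂) * (x ^ ε₁ * y ^ ε₂ * z ^ ε₃) := by ring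
      _ ≤ x ^ α * y ^ β * z ^ γ * (x + y) ^ δ * ((x + y) ^ (ε₁ + ε₂) * z ^ ε₃) := by
          gcongr
          · exact pow_mul_pow_le_add_pow (by linarith) (by linarith) (by linarith) hδ
          · exact pow_mul_pow_le_add_pow (by linarith) (by linarith) (by linarith) le_rfl
      _ ≤ x ^ α * y ^ β * z ^ γ * (x + y) ^ δ * (x + y + z) ^ ε := by
          gcongr
          exact pow_mul_pow_le_add_pow (by linarith) (by linarith) (by linarith) hε
  calc wittenTerm α β γ δ ε x y z ≤ 1 / (x ^ 2 * y ^ 2 * z ^ 2) :=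
        one_div_le_one_div_of_le (by positivity) key
    _ = 1 / x ^ 2 * (1 / y ^ 2 * (1 / z ^ 2)) := by ring

theorem summable_wittenSummand (δ₁ δ₂ ε₁ ε₂ ε₃ : ℕ) (hδ : δ₁ + δ₂ ≤ δ)
    (hε : ε₁ + ε₂ + ε₃ ≤ ε) (hαx : 2 ≤ α + δ₁ + ε₁) (hβy : 2 ≤ β + δ₂ + ε₂) (hγz : 2 ≤ γ + ε₃) :
    Summable (wittenSummand α β γ δ ε) := by
  have hsq : Summable fun n : ℕ => 1 / ((n : ℝ) + 1) ^ 2 := by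
    exact_mod_cast (summable_nat_add_iff 1).2 (Real.summable_one_div_nat_pow.2 one_lt_two)
  have hone (n : ℕ) : (1 : ℝ) ≤ n + 1 := by simp
  refine Summable.of_nonneg_of_le (fun p => by unfold wittenSummand wittenTerm; positivity)
    (fun p => wittenTerm_le δ₁ δ₂ ε₁ ε₂ ε₃ hδ hε hαx hβy hγz (hone _) (hone _) (hone _))
    (hsq.mul_of_nonneg (hsq.mul_of_nonneg hsq ?_ ?_) ?_ ?_) <;>
  exact fun _ => by positivity

theorem summable_wittenSummand_of_two_le (hα : 2 ≤ α) (hβ : 2 ≤ β) (hγε : 2 ≤ γ + ε) :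
    Summable (wittenSummand α β γ δ ε) :=
  summable_wittenSummand 0 0 0 0 ε (by omega) (by omega) (by omega) (by omega) (by omega)

theorem Summable.tsum_prod₃ {E α β γ : Type*} [AddCommGroup E] [UniformSpace E]
    [IsUniformAddGroup E] [CompleteSpace E] [T0Space E] {f : α × β × γ → E} (h : Summable f) :
    ∑' p, f p = ∑' (a : α) (b : β) (c : γ), f (a, b, c) := by
  rw [h.tsum_prod]
  exact tsum_congr fun a => (h.prod_factor a).tsum_prod

lemma tsum_sum_mul_left {ι β : Type*} {s : Finset ι} (w : ι → ℝ) {g : ι → β → ℝ}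
    (h : ∀ i ∈ s, Summable (g i)) : ∑' p, ∑ i ∈ s, w i * g i p = ∑ i ∈ s, w i * ∑' p, g i p := by
  rw [Summable.tsum_finsetSum fun i hi => (h i hi).mul_left (w i)]
  exact sum_congr rfl fun i _ => tsum_mul_left

lemma summable_sum_mul_left {ι β : Type*} {s : Finset ι} (w : ι → ℝ) {g : ι → β → ℝ}
    (h : ∀ i ∈ s, Summable (g i)) : Summable fun p => ∑ i ∈ s, w i * g i p :=
  summable_sum fun i hi => (h i hi).mul_left (w i)

theorem wittenSl4_eq_tsum (h : Summable (wittenSummand α β γ δ ε)) :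
    wittenSl4 α β γ δ 0 ε = ∑' p, wittenSummand α β γ δ ε p := by
  rw [h.tsum_prod₃, wittenSl4]
  refine tsum_congr fun n₁ => tsum_congr fun n₂ => tsum_congr fun n₃ => ?_
  simp only [wittenTerm, pow_zero, mul_one]
  ring_nf

theorem tsum_wittenSummand_eq_rzeta_mul (h : Summable (wittenSummand α β γ δ 0)) :
    ∑' p, wittenSummand α β γ δ 0 p = rzeta γ * wittenSl3 α β δ := by
  rw [h.tsum_prod₃, mul_comm, wittenSl3, ← tsum_mul_right]
  refine tsum_congr fun n₁ => ?_
  rw [← tsum_mul_right]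
  refine tsum_congr fun n₂ => ?_
  rw [rzeta, ← tsum_mul_left]
  refine tsum_congr fun n₃ => ?_
  simp only [wittenTerm, pow_zero, mul_one]
  ring_nf

theorem tsum_wittenSummand_eq_tripleZeta (h : Summable (wittenSummand α 0 0 δ ε)) :
    ∑' p, wittenSummand α 0 0 δ ε p = tripleZeta ε δ α := by
  rw [h.tsum_prod₃, tripleZeta]
  refine tsum_congr fun n₁ => tsum_congr fun n₂ => tsum_congr fun n₃ => ?_
  simp only [wittenTerm, pow_zero, mul_one]
  ring_nf

theorem tsum_wittenSummand_swap :
    ∑' p, wittenSummand α β γ δ ε p = ∑' p, wittenSummand β α γ δ ε p := by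
  let swap : ℕ × ℕ × ℕ ≃ ℕ × ℕ × ℕ :=
    ⟨fun p => (p.2.1, p.1, p.2.2), fun p => (p.2.1, p.1, p.2.2), fun _ => rfl, fun _ => rfl⟩
  rw [← swap.tsum_eq]
  exact tsum_congr fun p => wittenTerm_swap

theorem tsum_wittenSummand_eq_sum_tripleZeta {a b : ℕ} (ha : 1 ≤ a) (hb : 1 ≤ b) (hδ : 2 ≤ δ)
    (hε : 2 ≤ ε) :
    ∑' p, wittenSummand a b 0 δ ε p =
      ∑ j ∈ Icc 1 a, ((a + b - j - 1).choose (b - 1) : ℝ) * tripleZeta ε (a + b + δ - j) j +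
      ∑ j ∈ Icc 1 b, ((a + b - j - 1).choose (a - 1) : ℝ) * tripleZeta ε (a + b + δ - j) j := by
  have hsumx {γ η : ℕ} (hγ : 1 ≤ γ) (hη : 3 ≤ η) : Summable (wittenSummand γ 0 0 η ε) :=
    summable_wittenSummand 1 2 0 0 ε (by omega) (by omega) (by omega) (by omega) (by omega)
  have hsumy {γ η : ℕ} (hγ : 1 ≤ γ) (hη : 3 ≤ η) : Summable (wittenSummand 0 γ 0 η ε) :=
    summable_wittenSummand 2 1 0 0 ε (by omega) (by omega) (by omega) (by omega) (by omega)
  have hA : ∀ j ∈ Icc 1 a, Summable (wittenSummand j 0 0 (a + b + δ - j) ε) := fun j hj => by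
    rw [mem_Icc] at hj; exact hsumx hj.1 (by omega)
  have hB : ∀ j ∈ Icc 1 b, Summable (wittenSummand 0 j 0 (a + b + δ - j) ε) := fun j hj => by
    rw [mem_Icc] at hj; exact hsumy hj.1 (by omega)
  rw [tsum_congr fun p =>
      wittenTerm_eq_sum_add (by positivity) (by positivity) (by positivity) ha hb,
    Summable.tsum_add (summable_sum_mul_left _ hA) (summable_sum_mul_left _ hB),
    tsum_sum_mul_left _ hA, tsum_sum_mul_left _ hB]
  congr 1 <;> refine sum_congr rfl fun j hj => ?_ <;> rw [mem_Icc] at hj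
  · rw [tsum_wittenSummand_eq_tripleZeta (hA j (mem_Icc.2 hj))]
  · rw [tsum_wittenSummand_swap, tsum_wittenSummand_eq_tripleZeta (hsumx hj.1 (by omega))]

theorem tsum_wittenSummand_eq_sum_sub {a b c d f : ℕ} (ha : 2 ≤ a) (hb : 2 ≤ b) (hc : 1 ≤ c)
    (hf : 1 ≤ f) :
    ∑' p, wittenSummand a b c d f p =
      ∑ i ∈ Icc 2 c, ((c + f - i - 1).choose (f - 1) : ℝ) * (-1) ^ (c + i) *
        ∑' p, wittenSummand a b i (c + d + f - i) 0 p +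
      ∑ i ∈ Icc 2 f, ((c + f - i - 1).choose (c - 1) : ℝ) * (-1) ^ c *
        ∑' p, wittenSummand a b 0 (c + d + f - i) i p -
      (-1) ^ c * ((c + f - 2).choose (c - 1) : ℝ) *
        ∑' p, wittenSummand a b 1 (c + d + f - 2) 1 p := by
  have hA : ∀ i ∈ Icc 2 c, Summable (wittenSummand a b i (c + d + f - i) 0) := fun i hi =>
    summable_wittenSummand_of_two_le ha hb (by rw [mem_Icc] at hi; omega)
  have hB : ∀ i ∈ Icc 2 f, Summable (wittenSummand a b 0 (c + d + f - i) i) := fun i hi =>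
    summable_wittenSummand_of_two_le ha hb (by rw [mem_Icc] at hi; omega)
  rw [tsum_congr fun p =>
      wittenTerm_eq_sum_sub (by positivity) (by positivity) (by positivity) hc hf,
    Summable.tsum_sub ((summable_sum_mul_left _ hA).add (summable_sum_mul_left _ hB))
      ((summable_wittenSummand_of_two_le ha hb le_rfl).mul_left _),
    Summable.tsum_add (summable_sum_mul_left _ hA) (summable_sum_mul_left _ hB),
    tsum_sum_mul_left _ hA, tsum_sum_mul_left _ hB, tsum_mul_left]

end Witten

theorem eq22_general (a b c d f : ℕ)
    (ha : 2 ≤ a) (hb : 2 ≤ b) (hc : 2 ≤ c) (hf : 2 ≤ f) :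
    wittenSl4 a b c d 0 f =
      (∑ i ∈ Finset.Icc 2 c, (Nat.choose (c + f - i - 1) (f - 1) : ℝ) * (-1) ^ (c + i) *
        rzeta i * wittenSl3 a b (c + d + f - i)) +
      (∑ i ∈ Finset.Icc 2 f, (Nat.choose (c + f - i - 1) (c - 1) : ℝ) * (-1) ^ c *
        ((∑ j ∈ Finset.Icc 1 a, (Nat.choose (a + b - j - 1) (b - 1) : ℝ) *
            tripleZeta i (a + b + c + d + f - i - j) j) +
         (∑ j ∈ Finset.Icc 1 b, (Nat.choose (a + b - j - 1) (a - 1) : ℝ) *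
            tripleZeta i (a + b + c + d + f - i - j) j))) -
      (-1 : ℝ) ^ c * (Nat.choose (c + f - 2) (c - 1) : ℝ) *
        wittenSl4 a b 1 (c + d + f - 2) 0 1 := by
  rw [wittenSl4_eq_tsum (summable_wittenSummand_of_two_le ha hb (by omega)),
    wittenSl4_eq_tsum (summable_wittenSummand_of_two_le ha hb le_rfl),
    tsum_wittenSummand_eq_sum_sub ha hb (by omega) (by omega)]
  congr 2 <;> refine sum_congr rfl fun i hi => ?_ <;> rw [mem_Icc] at hi
  · rw [tsum_wittenSummand_eq_rzeta_mul (summable_wittenSummand_of_two_le ha hb (by omega)),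
      ← mul_assoc]
  · rw [tsum_wittenSummand_eq_sum_tripleZeta (by omega) (by omega) (by omega) hi.1,
      show a + b + (c + d + f - i) = a + b + c + d + f - i by omega]

theorem eq22 (a b c d f : ℕ)
    (ha : 2 ≤ a) (hb : 2 ≤ b) (hc : 2 ≤ c) (hd : 2 ≤ d) (hf : 2 ≤ f) :
    wittenSl4 a b c d 0 f =
      (∑ i ∈ Finset.Icc 2 c, (Nat.choose (c + f - i - 1) (f - 1) : ℝ) * (-1) ^ (c + i) *
        rzeta i * wittenSl3 a b (c + d + f - i)) +
      (∑ i ∈ Finset.Icc 2 f, (Nat.choose (c + f - i - 1) (c - 1) : ℝ) * (-1) ^ c *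
        ((∑ j ∈ Finset.Icc 1 a, (Nat.choose (a + b - j - 1) (b - 1) : ℝ) *
            tripleZeta i (a + b + c + d + f - i - j) j) +
         (∑ j ∈ Finset.Icc 1 b, (Nat.choose (a + b - j - 1) (a - 1) : ℝ) *
            tripleZeta i (a + b + c + d + f - i - j) j))) -
      (-1 : ℝ) ^ c * (Nat.choose (c + f - 2) (c - 1) : ℝ) *
        wittenSl4 a b 1 (c + d + f - 2) 0 1 :=
  eq22_general a b c d f ha hb hc hf
end
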